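/- arXiv:1907.01740 — 2 statements merged into one kernel-verified Lean document; each statement's English description precedes it below -/
import Mathlib

section
/- Let H be a real Hilbert space and J : H → ℝ a convex continuous function. For each ε > 0 suppose u_ε ∈ H is a minimizer of the perturbed functional J_ε(u) := J(u) + ε‖u‖², i.e., J(u_ε) + ε‖u_ε‖² ≤ J(u) + ε‖u‖² for all u ∈ H. Then the following statements are equivalent: (i) J attains its infimum on H; (ii) sup_{ε∈(0,1]} ‖u_ε‖ < ∞; (iii) the family (u_ε)_{ε>0} converges strongly in H as ε → 0⁺ (i.e., there is u* ∈ H with ‖u_ε − u*‖ → 0 as ε → 0⁺). Moreover, whenever (i), (ii), or (iii) holds, the strong limit u* := lim_{ε→0⁺} u_ε is a minimizer of J. -/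
open Filter

/-- Let `H` be a real Hilbert space, `J : H → ℝ` convex and continuous, and
for each `ε > 0` let `u ε` minimize `w ↦ J w + ε‖w‖²`.  Then the following are equivalent:
(i) `J` attains its infimum on `H`;
(ii) `sup_{ε∈(0,1]} ‖u ε‖ < ∞`;
(iii) `u ε` converges strongly in `H` as `ε → 0⁺`.
Moreover, any strong limit of `u ε` as `ε → 0⁺` is a minimizer of `J`. -/
theorem stmt_5 {H : Type*} [NormedAddCommGroup H] [InnerProductSpace ℝ H] [CompleteSpace H]
    (J : H → ℝ) (hconv : ConvexOn ℝ Set.univ J) (hcont : Continuous J)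
    (u : ℝ → H)
    (hmin : ∀ ε : ℝ, 0 < ε → ∀ w : H, J (u ε) + ε * ‖u ε‖ ^ 2 ≤ J w + ε * ‖w‖ ^ 2) :
    ((∃ ustar : H, ∀ w : H, J ustar ≤ J w) ↔
        (∃ M : ℝ, ∀ ε ∈ Set.Ioc (0:ℝ) 1, ‖u ε‖ ≤ M)) ∧
    ((∃ ustar : H, ∀ w : H, J ustar ≤ J w) ↔
        (∃ ustar : H, Tendsto (fun ε => ‖u ε - ustar‖) (nhdsWithin 0 (Set.Ioi 0)) (nhds 0))) ∧
    (∀ ustar : H, Tendsto (fun ε => ‖u ε - ustar‖) (nhdsWithin 0 (Set.Ioi 0)) (nhds 0) →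
        ∀ w : H, J ustar ≤ J w) := by
  -- monotonicity of ε ↦ ‖u ε‖²
  have mono : ∀ δ ε : ℝ, 0 < δ → δ ≤ ε → ‖u ε‖ ^ 2 ≤ ‖u δ‖ ^ 2 := by
    intro δ ε hδ hle
    rcases eq_or_lt_of_le hle with rfl | hlt
    · exact le_refl _
    · have hε : 0 < ε := hδ.trans hlt
      have h1 := hmin ε hε (u δ)
      have h2 := hmin δ hδ (u ε)
      nlinarith [h1, h2]
  -- strong convexity midpoint estimate
  have key : ∀ δ ε : ℝ, 0 < δ → δ ≤ ε →
      ‖u ε - u δ‖ ^ 2 ≤ 2 * (‖u δ‖ ^ 2 - ‖u ε‖ ^ 2) := by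
    intro δ ε hδ hle
    have hε : 0 < ε := lt_of_lt_of_le hδ hle
    set m : H := (2:ℝ)⁻¹ • (u ε + u δ) with hm
    have hpar : ‖m‖ ^ 2 = (‖u ε‖ ^ 2 + ‖u δ‖ ^ 2) / 2 - ‖u ε - u δ‖ ^ 2 / 4 := by
      have h1 := norm_add_sq_real (u ε) (u δ)
      have h2 := norm_sub_sq_real (u ε) (u δ)
      have h3 : ‖m‖ = (2:ℝ)⁻¹ * ‖u ε + u δ‖ := by
        rw [hm, norm_smul]; norm_num
      rw [h3]; nlinarith [h1, h2]
    have hc : J m ≤ (2:ℝ)⁻¹ * J (u ε) + (2:ℝ)⁻¹ * J (u δ) := by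
      have := hconv.2 (Set.mem_univ (u ε)) (Set.mem_univ (u δ))
        (by norm_num : (0:ℝ) ≤ 2⁻¹) (by norm_num : (0:ℝ) ≤ 2⁻¹) (by norm_num)
      rw [hm, smul_add]
      exact this
    have h1 := hmin ε hε m
    have h2 := hmin δ hδ m
    have hab := mono δ ε hδ hle
    nlinarith [h1, h2, hc, hpar, sq_nonneg ‖u ε - u δ‖]
  -- part C : any strong limit is a minimizer
  have partC : ∀ ustar : H,
      Tendsto (fun ε => ‖u ε - ustar‖) (nhdsWithin 0 (Set.Ioi 0)) (nhds 0) →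
      ∀ w : H, J ustar ≤ J w := by
    intro ustar hten w
    have hu : Tendsto u (nhdsWithin 0 (Set.Ioi 0)) (nhds ustar) :=
      tendsto_iff_norm_sub_tendsto_zero.mpr hten
    have h1 : Tendsto (fun ε => J (u ε)) (nhdsWithin 0 (Set.Ioi 0)) (nhds (J ustar)) :=
      (hcont.tendsto _).comp hu
    have hid : Tendsto (fun ε : ℝ => ε) (nhdsWithin 0 (Set.Ioi 0)) (nhds 0) :=
      tendsto_id.mono_left nhdsWithin_le_nhds
    have h2 : Tendsto (fun ε : ℝ => J w + ε * ‖w‖ ^ 2) (nhdsWithin 0 (Set.Ioi 0))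
        (nhds (J w)) := by
      have hc : Tendsto (fun _ : ℝ => J w) (nhdsWithin 0 (Set.Ioi 0)) (nhds (J w)) :=
        tendsto_const_nhds
      have := hc.add (hid.mul_const (‖w‖ ^ 2))
      simpa using this
    refine le_of_tendsto_of_tendsto h1 h2 ?_
    filter_upwards [self_mem_nhdsWithin] with ε (hε : ε ∈ Set.Ioi (0:ℝ))
    have := hmin ε hε w
    nlinarith [sq_nonneg ‖u ε‖, mul_nonneg (le_of_lt hε) (sq_nonneg ‖u ε‖)]
  -- (i) → (ii)
  have i_to_ii : (∃ ustar : H, ∀ w : H, J ustar ≤ J w) →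
      ∃ M : ℝ, ∀ ε ∈ Set.Ioc (0:ℝ) 1, ‖u ε‖ ≤ M := by
    rintro ⟨us, hus⟩
    refine ⟨‖us‖, fun ε hε => ?_⟩
    have h1 := hmin ε hε.1 us
    have h2 := hus (u ε)
    have h3 : ε * ‖u ε‖ ^ 2 ≤ ε * ‖us‖ ^ 2 := by linarith
    have h4 : ‖u ε‖ ^ 2 ≤ ‖us‖ ^ 2 := le_of_mul_le_mul_left h3 hε.1
    nlinarith [norm_nonneg (u ε), norm_nonneg us]
  -- (ii) → (iii)
  have ii_to_iii : (∃ M : ℝ, ∀ ε ∈ Set.Ioc (0:ℝ) 1, ‖u ε‖ ≤ M) →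
      ∃ ustar : H, Tendsto (fun ε => ‖u ε - ustar‖) (nhdsWithin 0 (Set.Ioi 0)) (nhds 0) := by
    rintro ⟨M, hM⟩
    set S := (fun ε => ‖u ε‖ ^ 2) '' Set.Ioc (0:ℝ) 1 with hS
    have hSne : S.Nonempty := ⟨‖u 1‖ ^ 2, 1, by norm_num, rfl⟩
    have hSbdd : BddAbove S := by
      refine ⟨M ^ 2, ?_⟩
      rintro x ⟨ε, hε, rfl⟩
      show ‖u ε‖ ^ 2 ≤ M ^ 2
      nlinarith [hM ε hε, norm_nonneg (u ε)]
    set L := sSup S with hL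
    have hle : ∀ ε ∈ Set.Ioc (0:ℝ) 1, ‖u ε‖ ^ 2 ≤ L := fun ε hε =>
      le_csSup hSbdd ⟨ε, hε, rfl⟩
    have hcauchy : Cauchy (map u (nhdsWithin 0 (Set.Ioi 0))) := by
      rw [Metric.cauchy_iff]
      refine ⟨map_neBot, fun θ hθ => ?_⟩
      have hη : (0:ℝ) < θ ^ 2 / 8 := by positivity
      obtain ⟨x, ⟨ε₀, hε₀, rfl⟩, hx⟩ := exists_lt_of_lt_csSup hSne (by linarith : L - θ^2/8 < L)
      refine ⟨u '' Set.Ioc 0 ε₀, image_mem_map (Ioc_mem_nhdsGT_of_mem ⟨le_rfl, hε₀.1⟩), ?_⟩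
      rintro x ⟨δ, hδ, rfl⟩ y ⟨ε, hε, rfl⟩
      have hbound : ∀ γ ∈ Set.Ioc (0:ℝ) ε₀, L - θ^2/8 < ‖u γ‖ ^ 2 ∧ ‖u γ‖ ^ 2 ≤ L := by
        intro γ hγ
        have h1 : ‖u ε₀‖ ^ 2 ≤ ‖u γ‖ ^ 2 := mono γ ε₀ hγ.1 hγ.2
        exact ⟨lt_of_lt_of_le hx h1,
          hle γ ⟨hγ.1, hγ.2.trans hε₀.2⟩⟩
      have hsq : ‖u δ - u ε‖ ^ 2 < θ ^ 2 := by
        rcases le_total δ ε with h | h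
        · have := key δ ε hδ.1 h
          have hd := hbound δ hδ
          have he := hbound ε ⟨lt_of_lt_of_le hδ.1 h, hε.2⟩
          have : ‖u ε - u δ‖ ^ 2 ≤ 2 * (‖u δ‖^2 - ‖u ε‖^2) := this
          have hsymm : ‖u δ - u ε‖ = ‖u ε - u δ‖ := norm_sub_rev _ _
          rw [hsymm]
          nlinarith
        · have := key ε δ hε.1 h
          have hd := hbound δ ⟨lt_of_lt_of_le hε.1 h, hδ.2⟩
          have he := hbound ε hε
          nlinarith
      rw [dist_eq_norm]
      exact lt_of_pow_lt_pow_left₀ 2 hθ.le hsq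
    obtain ⟨ustar, hustar⟩ := CompleteSpace.complete hcauchy
    refine ⟨ustar, tendsto_iff_norm_sub_tendsto_zero.mp hustar⟩
  refine ⟨⟨i_to_ii, fun h => ?_⟩, ⟨fun h => ii_to_iii (i_to_ii h), ?_⟩, partC⟩
  · obtain ⟨us, hus⟩ := ii_to_iii h
    exact ⟨us, partC us hus⟩
  · rintro ⟨us, hus⟩
    exact ⟨us, partC us hus⟩
end

section
/- Let (Ω, F, P) be a probability space and G ⊆ F a sub-σ-algebra for which there exists Ω₁ ∈ G with 0 < P(Ω₁) < 1. Let 0 ≤ t < T and, for each ε > 0, let F_ε ∈ L²(t,T;ℝ^{m×n}) be a deterministic function. Suppose that for every bounded G-measurable random vector ξ : Ω → ℝⁿ with E[ξ] = 0, the family of processes (s,ω) ↦ F_ε(s)ξ(ω) is Cauchy in L²((t,T)×Ω;ℝ^m) as ε → 0⁺. Then the family (F_ε)_{ε>0} is Cauchy in L²(t,T;ℝ^{m×n}) as ε → 0⁺. -/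
open MeasureTheory

/-- Squared Frobenius norm of a real matrix. -/
noncomputable def msq {m n : ℕ} (M : Matrix (Fin m) (Fin n) ℝ) : ℝ := ∑ i, ∑ j, (M i j) ^ 2

/-- Squared Euclidean norm of a real vector. -/
noncomputable def vsq {n : ℕ} (v : Fin n → ℝ) : ℝ := ∑ i, (v i) ^ 2

private lemma vsq_smul_pt {m n : ℕ} (A B : Matrix (Fin m) (Fin n) ℝ) (j : Fin n) (a : ℝ) :
    vsq (A.mulVec (a • (Pi.single j (1:ℝ) : Fin n → ℝ))
        - B.mulVec (a • (Pi.single j (1:ℝ) : Fin n → ℝ)))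
      = a ^ 2 * ∑ i, ((A - B) i j) ^ 2 := by
  rw [Matrix.mulVec_smul, Matrix.mulVec_smul, ← smul_sub]
  have h : vsq (a • (A.mulVec (Pi.single j (1:ℝ) : Fin n → ℝ)
        - B.mulVec (Pi.single j (1:ℝ) : Fin n → ℝ)))
      = a ^ 2 * vsq (A.mulVec (Pi.single j (1:ℝ) : Fin n → ℝ)
        - B.mulVec (Pi.single j (1:ℝ) : Fin n → ℝ)) := by
    simp [vsq, Finset.mul_sum, mul_pow]
  rw [h]
  congr 1
  simp [vsq, Matrix.mulVec_single, Matrix.sub_apply]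

/-- Let `G ≤ F` be a sub-σ-algebra admitting a set `Ω₁ ∈ G` with
`0 < P(Ω₁) < 1`, and let `F ε ∈ L²(t,T;ℝ^{m×n})` (Frobenius norm) for `ε > 0` be deterministic.
If for every bounded `G`-measurable mean-zero random vector `ξ` the processes
`(s,ω) ↦ F ε s ξ(ω)` form a Cauchy family in `L²((t,T)×Ω;ℝ^m)` as `ε → 0⁺`, then
`(F ε)_{ε>0}` is Cauchy in `L²(t,T;ℝ^{m×n})` as `ε → 0⁺`. -/
theorem stmt_6 {Ω : Type*} [F : MeasurableSpace Ω] (μ : Measure Ω) [IsProbabilityMeasure μ]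
    (G : MeasurableSpace Ω) (hG : G ≤ F)
    (Ω₁ : Set Ω) (hΩ₁ : MeasurableSet[G] Ω₁) (hΩ₁pos : 0 < μ Ω₁) (hΩ₁lt : μ Ω₁ < 1)
    {m n : ℕ} (t T : ℝ) (ht : 0 ≤ t) (htT : t < T)
    (Fε : ℝ → ℝ → Matrix (Fin m) (Fin n) ℝ)
    (hFmeas : ∀ ε > (0:ℝ), ∀ i j, Measurable fun s => Fε ε s i j)
    (hFL2 : ∀ ε > (0:ℝ), IntegrableOn (fun s => msq (Fε ε s)) (Set.Ioo t T))
    (hCauchy : ∀ ξ : Ω → Fin n → ℝ, Measurable[G] ξ → (∃ C : ℝ, ∀ ω, vsq (ξ ω) ≤ C) →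
      (∫ ω, ξ ω ∂μ) = 0 →
      ∀ δ > (0:ℝ), ∃ ε₀ > (0:ℝ), ∀ ε₁ ∈ Set.Ioo (0:ℝ) ε₀, ∀ ε₂ ∈ Set.Ioo (0:ℝ) ε₀,
        Real.sqrt (∫ ω, (∫ s in Set.Ioo t T,
          vsq ((Fε ε₁ s).mulVec (ξ ω) - (Fε ε₂ s).mulVec (ξ ω))) ∂μ) < δ) :
    ∀ δ > (0:ℝ), ∃ ε₀ > (0:ℝ), ∀ ε₁ ∈ Set.Ioo (0:ℝ) ε₀, ∀ ε₂ ∈ Set.Ioo (0:ℝ) ε₀,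
      Real.sqrt (∫ s in Set.Ioo t T, msq (Fε ε₁ s - Fε ε₂ s)) < δ := by
  intro δ hδ
  rcases Nat.eq_zero_or_pos n with hn | hn
  · refine ⟨1, one_pos, fun ε₁ _ ε₂ _ => ?_⟩
    subst hn
    have hz : ∀ s, msq (Fε ε₁ s - Fε ε₂ s) = 0 := by intro s; simp [msq]
    simp only [hz, integral_zero]
    simpa using hδ
  letI : MeasurableSpace Ω := F
  -- set-up of the probabilistic quantities
  set p : ℝ := (μ Ω₁).toReal with hp
  have hΩ₁m : MeasurableSet[F] Ω₁ := hG _ hΩ₁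
  have hfin : μ Ω₁ ≠ ⊤ := (hΩ₁lt.trans ENNReal.one_lt_top).ne
  have hp0 : 0 < p := ENNReal.toReal_pos hΩ₁pos.ne' hfin
  have hp1 : p < 1 := by
    have := (ENNReal.toReal_lt_toReal hfin ENNReal.one_ne_top).mpr hΩ₁lt
    simpa using this
  set v : ℝ := p * (1 - p) with hvdef
  have hv : 0 < v := mul_pos hp0 (by linarith)
  set c : Ω → ℝ := fun ω => Set.indicator Ω₁ (fun _ => (1:ℝ)) ω - p with hc
  have hcsq : ∀ ω, (c ω) ^ 2 = Set.indicator Ω₁ (fun _ => (1-p)^2) ω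
      + Set.indicator Ω₁ᶜ (fun _ => p^2) ω := by
    intro ω
    by_cases hω : ω ∈ Ω₁ <;>
      simp [hc, Set.indicator_of_mem, Set.indicator_of_notMem, hω] <;> ring
  have hind1 : Integrable (fun ω => Set.indicator Ω₁ (fun _ => (1-p)^2) ω) μ :=
    (integrable_const ((1-p)^2)).indicator hΩ₁m
  have hind2 : Integrable (fun ω => Set.indicator Ω₁ᶜ (fun _ => p^2) ω) μ :=
    (integrable_const (p^2)).indicator hΩ₁m.compl
  have hind3 : Integrable (fun ω => Set.indicator Ω₁ (fun _ => (1:ℝ)) ω) μ :=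
    (integrable_const (1:ℝ)).indicator hΩ₁m
  have hcint2 : Integrable (fun ω => (c ω) ^ 2) μ := by
    simp_rw [hcsq]
    exact hind1.add hind2
  have hcintval : ∫ ω, (c ω) ^ 2 ∂μ = v := by
    simp_rw [hcsq]
    rw [integral_add hind1 hind2,
      integral_indicator_const _ hΩ₁m, integral_indicator_const _ hΩ₁m.compl]
    have h2 : (μ Ω₁ᶜ).toReal = 1 - p := by
      rw [prob_compl_eq_one_sub hΩ₁m,
        ENNReal.toReal_sub_of_le hΩ₁lt.le ENNReal.one_ne_top]
      simp [hp]
    rw [measureReal_def, measureReal_def, h2, ← hp]; simp only [smul_eq_mul, hvdef]; ring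
  have hcmean : ∫ ω, c ω ∂μ = 0 := by
    simp_rw [hc]
    rw [integral_sub hind3 (integrable_const p), integral_indicator_const _ hΩ₁m]
    simp [hp, measureReal_def]
  have hcbd : ∀ ω, (c ω) ^ 2 ≤ 1 := by
    intro ω
    have hcases : c ω = 1 - p ∨ c ω = -p := by
      by_cases hω : ω ∈ Ω₁
      · left; simp [hc, hω]
      · right; simp [hc, hω]
    rcases hcases with h | h <;> rw [h] <;> nlinarith
  -- the test random vectors
  set ξ : Fin n → Ω → Fin n → ℝ :=
    fun j ω => c ω • (Pi.single j (1:ℝ) : Fin n → ℝ) with hξ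
  have hξmeas : ∀ j, Measurable[G] (ξ j) := by
    intro j
    have hcm : Measurable[G] c :=
      ((measurable_const.indicator hΩ₁ : Measurable[G] _).sub measurable_const)
    have hf : ∀ i, Measurable[G] fun ω => ξ j ω i := by
      intro i
      simpa [hξ, Pi.single_apply, smul_eq_mul] using
        hcm.mul_const (if i = j then (1:ℝ) else 0)
    exact @measurable_pi_lambda Ω (Fin n) (fun _ => ℝ) G (fun _ => inferInstance) _ hf
  have hξbd : ∀ j, ∃ C : ℝ, ∀ ω, vsq (ξ j ω) ≤ C := by
    intro j
    refine ⟨1, fun ω => ?_⟩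
    have h1 : vsq (ξ j ω) = (c ω) ^ 2 * vsq (Pi.single j (1:ℝ) : Fin n → ℝ) := by
      simp [hξ, vsq, Finset.mul_sum, mul_pow]
    have h2 : vsq (Pi.single j (1:ℝ) : Fin n → ℝ) = 1 := by
      simp [vsq, Pi.single_apply, pow_two]
    rw [h1, h2, mul_one]; exact hcbd ω
  have hξmean : ∀ j, (∫ ω, ξ j ω ∂μ) = 0 := by
    intro j
    simp only [hξ]
    rw [integral_smul_const, hcmean, zero_smul]
  -- apply the Cauchy hypothesis columnwise
  set δ' : ℝ := δ * Real.sqrt v / Real.sqrt n with hδ'def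
  have hδ' : 0 < δ' := by
    apply div_pos (mul_pos hδ (Real.sqrt_pos.mpr hv))
    exact Real.sqrt_pos.mpr (by exact_mod_cast hn)
  have hch : ∀ j : Fin n, ∃ ε₀ > (0:ℝ), ∀ ε₁ ∈ Set.Ioo (0:ℝ) ε₀, ∀ ε₂ ∈ Set.Ioo (0:ℝ) ε₀,
      Real.sqrt (∫ ω, (∫ s in Set.Ioo t T,
        vsq ((Fε ε₁ s).mulVec (ξ j ω) - (Fε ε₂ s).mulVec (ξ j ω))) ∂μ) < δ' :=
    fun j => hCauchy (ξ j) (hξmeas j) (hξbd j) (hξmean j) δ' hδ'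
  choose e he hP using hch
  have hne : (Finset.univ : Finset (Fin n)).Nonempty := by
    simpa [Finset.univ_nonempty_iff] using Fin.pos_iff_nonempty.mp hn
  refine ⟨Finset.univ.inf' hne e, ?_, ?_⟩
  · exact (Finset.lt_inf'_iff hne).mpr fun j _ => he j
  intro ε₁ hε₁ ε₂ hε₂
  have hmem : ∀ j : Fin n, ε₁ ∈ Set.Ioo (0:ℝ) (e j) ∧ ε₂ ∈ Set.Ioo (0:ℝ) (e j) := by
    intro j
    have hle : Finset.univ.inf' hne e ≤ e j := Finset.inf'_le _ (Finset.mem_univ j)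
    exact ⟨⟨hε₁.1, lt_of_lt_of_le hε₁.2 hle⟩, ⟨hε₂.1, lt_of_lt_of_le hε₂.2 hle⟩⟩
  -- column functions and their integrals
  set g : Fin n → ℝ → ℝ := fun j s => ∑ i, ((Fε ε₁ s - Fε ε₂ s) i j) ^ 2 with hg
  set K : Fin n → ℝ := fun j => ∫ s in Set.Ioo t T, g j s with hK
  have hKnonneg : ∀ j, 0 ≤ K j := by
    intro j
    apply integral_nonneg
    intro s
    exact Finset.sum_nonneg fun i _ => sq_nonneg _
  -- integrability of the column functions
  have hgmeas : ∀ j, Measurable (g j) := by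
    intro j
    apply Finset.measurable_sum
    intro i _
    exact ((hFmeas ε₁ hε₁.1 i j).sub (hFmeas ε₂ hε₂.1 i j)).pow_const 2
  have hmsqbound : ∀ s, msq (Fε ε₁ s - Fε ε₂ s) ≤ 2 * msq (Fε ε₁ s) + 2 * msq (Fε ε₂ s) := by
    intro s
    simp only [msq, Matrix.sub_apply, Finset.mul_sum, ← Finset.sum_add_distrib]
    refine Finset.sum_le_sum fun i _ => Finset.sum_le_sum fun j _ => ?_
    nlinarith [sq_nonneg (Fε ε₁ s i j + Fε ε₂ s i j)]
  have hgbound : ∀ j s, g j s ≤ 2 * msq (Fε ε₁ s) + 2 * msq (Fε ε₂ s) := by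
    intro j s
    refine le_trans ?_ (hmsqbound s)
    have : g j s ≤ ∑ j', ∑ i, ((Fε ε₁ s - Fε ε₂ s) i j') ^ 2 :=
      Finset.single_le_sum (f := fun j' => ∑ i, ((Fε ε₁ s - Fε ε₂ s) i j') ^ 2)
        (fun j' _ => Finset.sum_nonneg fun i _ => sq_nonneg _) (Finset.mem_univ j)
    calc g j s ≤ ∑ j', ∑ i, ((Fε ε₁ s - Fε ε₂ s) i j') ^ 2 := this
    _ = msq (Fε ε₁ s - Fε ε₂ s) := by rw [msq, Finset.sum_comm]
  have hgint : ∀ j, IntegrableOn (g j) (Set.Ioo t T) := by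
    intro j
    apply Integrable.mono' (((hFL2 ε₁ hε₁.1).const_mul 2).add ((hFL2 ε₂ hε₂.1).const_mul 2))
      (hgmeas j).aestronglyMeasurable
    filter_upwards with s
    rw [Real.norm_of_nonneg (Finset.sum_nonneg fun i _ => sq_nonneg _)]
    exact hgbound j s
  -- the key columnwise estimate
  have hKlt : ∀ j : Fin n, K j < δ ^ 2 / n := by
    intro j
    have hj := hP j ε₁ (hmem j).1 ε₂ (hmem j).2
    have hid : (∫ ω, (∫ s in Set.Ioo t T,
        vsq ((Fε ε₁ s).mulVec (ξ j ω) - (Fε ε₂ s).mulVec (ξ j ω))) ∂μ) = v * K j := by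
      have hpt : ∀ ω, (∫ s in Set.Ioo t T,
          vsq ((Fε ε₁ s).mulVec (ξ j ω) - (Fε ε₂ s).mulVec (ξ j ω)))
          = (c ω) ^ 2 * K j := by
        intro ω
        have : ∀ s, vsq ((Fε ε₁ s).mulVec (ξ j ω) - (Fε ε₂ s).mulVec (ξ j ω))
            = (c ω) ^ 2 * g j s := fun s => vsq_smul_pt _ _ j (c ω)
        simp_rw [this]
        rw [integral_const_mul]
      simp_rw [hpt]
      rw [integral_mul_const, hcintval]
    rw [hid] at hj
    have hsq : v * K j < δ' ^ 2 := by
      have h1 : Real.sqrt (v * K j) < δ' := hj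
      have h2 : v * K j = Real.sqrt (v * K j) ^ 2 :=
        (Real.sq_sqrt (mul_nonneg hv.le (hKnonneg j))).symm
      rw [h2]
      exact pow_lt_pow_left₀ h1 (Real.sqrt_nonneg _) (by norm_num)
    have hδ'sq : δ' ^ 2 = δ ^ 2 * v / n := by
      rw [hδ'def, div_pow, mul_pow, Real.sq_sqrt hv.le, Real.sq_sqrt (Nat.cast_nonneg n)]
    rw [hδ'sq] at hsq
    have hn' : (0:ℝ) < n := by exact_mod_cast hn
    rw [lt_div_iff₀ hn'] at hsq
    rw [lt_div_iff₀ hn']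
    have h3 : v * (K j * n) < v * δ ^ 2 := by nlinarith [hsq]
    exact (mul_lt_mul_iff_right₀ hv).mp h3
  -- sum over columns
  have hsum : (∫ s in Set.Ioo t T, msq (Fε ε₁ s - Fε ε₂ s)) = ∑ j, K j := by
    have : ∀ s, msq (Fε ε₁ s - Fε ε₂ s) = ∑ j, g j s := by
      intro s; rw [msq, Finset.sum_comm]
    simp_rw [this]
    exact integral_finset_sum Finset.univ fun j _ => hgint j
  rw [hsum]
  rw [Real.sqrt_lt' hδ]
  calc (∑ j, K j) < ∑ _j : Fin n, δ ^ 2 / n :=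
        Finset.sum_lt_sum_of_nonempty hne fun j _ => hKlt j
    _ = δ ^ 2 := by
        have hn0 : (n:ℝ) ≠ 0 := by
          have : (0:ℝ) < n := by exact_mod_cast hn
          exact this.ne'
        rw [Finset.sum_const, Finset.card_univ, Fintype.card_fin, nsmul_eq_mul,
          mul_comm, div_mul_cancel₀ _ hn0]
end
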